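/- arXiv:2507.20797 — 2 statements merged into one kernel-verified Lean document; each statement's English description precedes it below -/
import Mathlib

section
/- With φ ∈ UCP^{G_τ}(A, B(H)), minimal Stinespring representation (π, V, K), and the induced partial action ({K_g}, {U_g}) on K: for all g ∈ G and a ∈ A_g, one has U_g π(a) U_g* = π(τ_{g^{-1}}(a)) restricted to K_g. -/
open scoped ComplexOrder
open ContinuousLinearMap MulOpposite

noncomputable section

/-- A linear map between (star) algebras is completely positive if for every `n`, every
`a : Fin n → A` and `b : Fin n → B`, the element `∑ i j, (b i)* φ((a i)* (a j)) (b j)` is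
positive.  For maps into `B(H)` (or any C*-algebra) this is equivalent to the usual
definition via matrix amplifications. -/
def IsCPMap {A B : Type*} [Ring A] [StarRing A] [Algebra ℂ A]
    [Ring B] [StarRing B] [Algebra ℂ B] [PartialOrder B] (φ : A →ₗ[ℂ] B) : Prop :=
  ∀ (n : ℕ) (a : Fin n → A) (b : Fin n → B),
    0 ≤ ∑ i : Fin n, ∑ j : Fin n, star (b i) * φ (star (a i) * a j) * b j

section Stinespring

variable {A H K : Type*} [CStarAlgebra A]
  [NormedAddCommGroup H] [InnerProductSpace ℂ H] [CompleteSpace H]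
  [NormedAddCommGroup K] [InnerProductSpace ℂ K] [CompleteSpace K]

/-- `(π, V, K)` is a minimal Stinespring representation of `φ : A → B(H)`. -/
def IsMinimalStinespring (φ : A →ₗ[ℂ] (H →L[ℂ] H))
    (π : A →⋆ₐ[ℂ] (K →L[ℂ] K)) (V : H →L[ℂ] K) : Prop :=
  (∀ a : A, φ a = ContinuousLinearMap.adjoint V ∘L (π a ∘L V)) ∧
  Dense ((Submodule.span ℂ {x : K | ∃ (a : A) (h : H), x = π a (V h)} : Submodule ℂ K) : Set K)

/-- The Radon–Nikodym map `T ↦ φ_T`, `φ_T(a) = V* π(a) T V`. -/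
def stinespringRN (π : A →⋆ₐ[ℂ] (K →L[ℂ] K)) (V : H →L[ℂ] K) (T : K →L[ℂ] K) :
    A →ₗ[ℂ] (H →L[ℂ] H) where
  toFun a := ContinuousLinearMap.adjoint V ∘L (π a ∘L (T ∘L V))
  map_add' a b := by simp [map_add, ContinuousLinearMap.add_comp, ContinuousLinearMap.comp_add]
  map_smul' c a := by simp [map_smul, ContinuousLinearMap.smul_comp, ContinuousLinearMap.comp_smul]

/-- The order interval `[0, φ]` of completely positive maps dominated by `φ`. -/
def CPBelow (φ : A →ₗ[ℂ] (H →L[ℂ] H)) : Set (A →ₗ[ℂ] (H →L[ℂ] H)) :=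
  {θ | IsCPMap θ ∧ IsCPMap (φ - θ)}

end Stinespring

/-- A partial action of a group `G` on a unital C*-algebra `A`: a family of closed two-sided
ideals `A_g` together with *-isomorphisms `τ_g : A_{g⁻¹} → A_g` such that `A_1 = A`, `τ_1 = id`
and `τ_g ∘ τ_h ⊆ τ_{gh}`.  The maps `τ_g` are recorded as global functions `A → A`, whose
relevant behaviour is only on the ideal `A_{g⁻¹}`. -/
structure CStarPartialAction (G A : Type*) [Group G] [CStarAlgebra A] where
  ideal : G → Submodule ℂ A
  isClosed_ideal : ∀ g, IsClosed (ideal g : Set A)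
  mul_mem_left : ∀ g (a : A), ∀ x ∈ ideal g, a * x ∈ ideal g
  mul_mem_right : ∀ g (a : A), ∀ x ∈ ideal g, x * a ∈ ideal g
  τ : G → A → A
  bijOn : ∀ g, Set.BijOn (τ g) (ideal g⁻¹) (ideal g)
  map_add : ∀ g, ∀ x ∈ ideal g⁻¹, ∀ y ∈ ideal g⁻¹, τ g (x + y) = τ g x + τ g y
  map_smul : ∀ g (c : ℂ), ∀ x ∈ ideal g⁻¹, τ g (c • x) = c • τ g x
  map_mul : ∀ g, ∀ x ∈ ideal g⁻¹, ∀ y ∈ ideal g⁻¹, τ g (x * y) = τ g x * τ g y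
  map_star : ∀ g, ∀ x ∈ ideal g⁻¹, τ g (star x) = star (τ g x)
  ideal_one : ideal 1 = ⊤
  τ_one : ∀ a, τ 1 a = a
  comp : ∀ g h, ∀ x ∈ ideal h⁻¹, τ h x ∈ ideal g⁻¹ → τ g (τ h x) = τ (g * h) x

variable {G A H K : Type*} [Group G] [CStarAlgebra A]
  [NormedAddCommGroup H] [InnerProductSpace ℂ H] [CompleteSpace H]
  [NormedAddCommGroup K] [InnerProductSpace ℂ K] [CompleteSpace K]

/-- `φ : A → B(H)` is completely positive and invariant under the partial action `τ`:
`φ(a) = φ(τ_g(a))` for all `g` and `a ∈ A_{g⁻¹}`. -/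
def IsCPInv (τ : CStarPartialAction G A) (φ : A →ₗ[ℂ] (H →L[ℂ] H)) : Prop :=
  IsCPMap φ ∧ ∀ g, ∀ a ∈ τ.ideal g⁻¹, φ a = φ (τ.τ g a)

/-- The set `UCP^{G_τ}(A, B(H))` of unital completely positive `τ`-invariant maps. -/
def UCPInvSet (τ : CStarPartialAction G A) (H : Type*) [NormedAddCommGroup H]
    [InnerProductSpace ℂ H] [CompleteSpace H] : Set (A →ₗ[ℂ] (H →L[ℂ] H)) :=
  {φ | IsCPMap φ ∧ φ 1 = 1 ∧ ∀ g, ∀ a ∈ τ.ideal g⁻¹, φ a = φ (τ.τ g a)}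

/-- The subspace `K_g = [π(A_{g⁻¹}) V H]` of the Stinespring dilation space. -/
def Kspace (τ : CStarPartialAction G A) (π : A →⋆ₐ[ℂ] (K →L[ℂ] K)) (V : H →L[ℂ] K)
    (g : G) : Submodule ℂ K :=
  (Submodule.span ℂ {x : K | ∃ a ∈ τ.ideal g⁻¹, ∃ h : H, x = π a (V h)}).topologicalClosure

/-- The family `U` of unitaries `U_g : K_{g⁻¹} → K_g` is determined by
`U_g(π(a) V h) = π(τ_{g⁻¹}(a)) V h` for `a ∈ A_g`. -/
def DeterminedU (τ : CStarPartialAction G A) (π : A →⋆ₐ[ℂ] (K →L[ℂ] K)) (V : H →L[ℂ] K)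
    (U : ∀ g : G, (Kspace τ π V g⁻¹) ≃ₗᵢ[ℂ] (Kspace τ π V g)) : Prop :=
  ∀ g, ∀ a ∈ τ.ideal g, ∀ (h : H) (x : Kspace τ π V g⁻¹),
    (x : K) = π a (V h) → ((U g x : K) = π (τ.τ g⁻¹ a) (V h))

/-- The set of operators appearing in the invariant Radon–Nikodym theorem (Stinespring
version): `T ∈ π(A)'`, `0 ≤ T ≤ 1`, `T(K_g) ⊆ K_g` and `T U_g = U_g T|_{K_{g⁻¹}}`. -/
def InvOperator (τ : CStarPartialAction G A) (π : A →⋆ₐ[ℂ] (K →L[ℂ] K)) (V : H →L[ℂ] K)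
    (U : ∀ g : G, (Kspace τ π V g⁻¹) ≃ₗᵢ[ℂ] (Kspace τ π V g)) (T : K →L[ℂ] K) : Prop :=
  (∀ a : A, Commute (π a) T) ∧ 0 ≤ T ∧ T ≤ 1 ∧
  (∀ g, ∀ x ∈ Kspace τ π V g, T x ∈ Kspace τ π V g) ∧
  (∀ g, ∀ x y : Kspace τ π V g⁻¹, (y : K) = T (x : K) → T ((U g x : K)) = (U g y : K))

/-- `C^S_φ`: the set `{α₁ T₁ + α₂ T₂ : αᵢ ∈ [-1,1], Tᵢ` invariant operators `}`. -/
def CSphi (τ : CStarPartialAction G A) (π : A →⋆ₐ[ℂ] (K →L[ℂ] K)) (V : H →L[ℂ] K)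
    (U : ∀ g : G, (Kspace τ π V g⁻¹) ≃ₗᵢ[ℂ] (Kspace τ π V g)) : Set (K →L[ℂ] K) :=
  {T | ∃ (α₁ α₂ : ℝ) (T₁ T₂ : K →L[ℂ] K), α₁ ∈ Set.Icc (-1 : ℝ) 1 ∧ α₂ ∈ Set.Icc (-1 : ℝ) 1 ∧
    InvOperator τ π V U T₁ ∧ InvOperator τ π V U T₂ ∧ T = (α₁ : ℂ) • T₁ + (α₂ : ℂ) • T₂}

/-- A closed subspace `K₀` (with orthogonal projection `P`) is faithful for a set `M ⊆ B(K)`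
if `P T|_{K₀} = 0` (equivalently `⟪T x, y⟫ = 0` for all `x y ∈ K₀`) implies `T = 0`. -/
def IsFaithfulSubspace (K₀ : Submodule ℂ K) (M : Set (K →L[ℂ] K)) : Prop :=
  ∀ T ∈ M, (∀ x ∈ K₀, ∀ y ∈ K₀, (inner ℂ (T x) y : ℂ) = 0) → T = 0
section HilbertModules

variable {B X : Type*} [Ring B] [StarRing B] [Norm B]
  [AddCommGroup X] [Module ℂ X] [Module Bᵐᵒᵖ X]

/-- `ip` is a `B`-valued inner product making the right `B`-module `X` a pre-Hilbert
`B`-module (Paschke).  Positivity of `⟨x,x⟩` is expressed in the C*-algebraic form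
`⟨x,x⟩ = c* c`. -/
structure IsPreHilbertModule (ip : X → X → B) : Prop where
  add_left : ∀ x y z : X, ip (x + y) z = ip x z + ip y z
  pos : ∀ x : X, ∃ c : B, ip x x = star c * c
  definite : ∀ x : X, ip x x = 0 → x = 0
  star_inner : ∀ x y : X, ip x y = star (ip y x)
  smul_left : ∀ (b : B) (x y : X), ip (op b • x) y = ip x y * b

/-- Completeness of `X` with respect to the norm `‖x‖ = ‖⟨x,x⟩‖^{1/2}`, expressed via
Cauchy sequences. -/
def IsHilbertComplete (ip : X → X → B) : Prop :=
  ∀ u : ℕ → X,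
    (∀ ε : ℝ, 0 < ε → ∃ N, ∀ m ≥ N, ∀ n ≥ N, ‖ip (u m - u n) (u m - u n)‖ < ε) →
    ∃ x : X, ∀ ε : ℝ, 0 < ε → ∃ N, ∀ n ≥ N, ‖ip (u n - x) (u n - x)‖ < ε

/-- `x` lies in the closure of the linear span of `S` (w.r.t. the norm induced by `ip`). -/
def InClosedSpan (ip : X → X → B) (S : Set X) (x : X) : Prop :=
  ∀ ε : ℝ, 0 < ε → ∃ y ∈ Submodule.span ℂ S, ‖ip (x - y) (x - y)‖ < ε

/-- `T : X → X` is an adjointable (bounded) operator on the pre-Hilbert module `(X, ip)`. -/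
def IsAdjointable (ip : X → X → B) (T : X → X) : Prop :=
  (∀ x y : X, T (x + y) = T x + T y) ∧
  (∃ C : ℝ, ∀ x : X, ‖ip (T x) (T x)‖ ≤ C * ‖ip x x‖) ∧
  (∃ S : X → X, ∀ x y : X, ip (T x) y = ip x (S y))

/-- A *-representation of `A` by adjointable operators on the pre-Hilbert module `(X, ip)`. -/
def IsStarRepresentation {A : Type*} [Ring A] [StarRing A] [Algebra ℂ A]
    (ip : X → X → B) (σ : A → X → X) : Prop :=
  (∀ a : A, IsAdjointable ip (σ a)) ∧
  (∀ a : A, ∀ (b : B) (x : X), σ a (op b • x) = op b • σ a x) ∧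
  (∀ a₁ a₂ : A, ∀ x : X, σ (a₁ + a₂) x = σ a₁ x + σ a₂ x) ∧
  (∀ (c : ℂ) (a : A) (x : X), σ (c • a) x = c • σ a x) ∧
  (∀ a₁ a₂ : A, ∀ x : X, σ (a₁ * a₂) x = σ a₁ (σ a₂ x)) ∧
  (∀ (a : A) (x y : X), ip (σ a x) y = ip x (σ (star a) y))

/-- `(σ, e, X)` is a Paschke dilation of `φ : A → B`. -/
def IsPaschkeDilation {A : Type*} [Ring A] [StarRing A] [Algebra ℂ A]
    (ip : X → X → B) (σ : A → X → X) (e : X) (φ : A → B) : Prop :=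
  IsPreHilbertModule ip ∧ IsHilbertComplete ip ∧ IsStarRepresentation ip σ ∧
  (∀ a : A, φ a = ip (σ a e) e) ∧
  (∀ x : X, InClosedSpan ip {z : X | ∃ (a : A) (b : B), z = σ a (op b • e)} x)

/-- A bounded `B`-module map `f : X → B`, i.e. an element of the dual module `X'`. -/
def IsBddModMap (ip : X → X → B) (f : X → B) : Prop :=
  (∀ x y : X, f (x + y) = f x + f y) ∧
  (∀ (b : B) (x : X), f (op b • x) = f x * b) ∧
  (∃ C : ℝ, ∀ x : X, ‖f x‖ ^ 2 ≤ C * ‖ip x x‖)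

/-- `ip'` is an extension of the `B`-valued inner product of `(X, ip)` to the dual module
`X' = {` bounded `B`-module maps `X → B}` (whose elements are represented here as functions
`X → B` satisfying `IsBddModMap`), making `X'` a self-dual Hilbert `B`-module and satisfying
`⟨x̂, f⟩ = f x`.  The right `B`-action on `X'` is `(f · b) x = b* (f x)`. -/
def IsSelfDualExtension (ip : X → X → B) (ip' : (X → B) → (X → B) → B) : Prop :=
  (∀ f g h : X → B, IsBddModMap ip f → IsBddModMap ip g → IsBddModMap ip h →
      ip' (f + g) h = ip' f h + ip' g h) ∧
  (∀ f : X → B, IsBddModMap ip f → ∃ c : B, ip' f f = star c * c) ∧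
  (∀ f : X → B, IsBddModMap ip f → ip' f f = 0 → f = 0) ∧
  (∀ f g : X → B, IsBddModMap ip f → IsBddModMap ip g → ip' f g = star (ip' g f)) ∧
  (∀ (b : B) (f g : X → B), IsBddModMap ip f → IsBddModMap ip g →
      ip' (fun x => star b * f x) g = ip' f g * b) ∧
  (∀ (x : X) (f : X → B), IsBddModMap ip f → ip' (fun y => ip y x) f = f x) ∧
  (∀ F : (X → B) → B,
      ((∀ f g : X → B, IsBddModMap ip f → IsBddModMap ip g → F (f + g) = F f + F g) ∧
       (∀ (b : B) (f : X → B), IsBddModMap ip f → F (fun x => star b * f x) = F f * b) ∧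
       (∃ C : ℝ, ∀ f : X → B, IsBddModMap ip f → ‖F f‖ ^ 2 ≤ C * ‖ip' f f‖)) →
      ∃ g : X → B, IsBddModMap ip g ∧ ∀ f : X → B, IsBddModMap ip f → F f = ip' f g) ∧
  (∀ u : ℕ → X → B, (∀ n, IsBddModMap ip (u n)) →
      (∀ ε : ℝ, 0 < ε → ∃ N, ∀ m ≥ N, ∀ n ≥ N, ‖ip' (u m - u n) (u m - u n)‖ < ε) →
      ∃ f : X → B, IsBddModMap ip f ∧
        ∀ ε : ℝ, 0 < ε → ∃ N, ∀ n ≥ N, ‖ip' (u n - f) (u n - f)‖ < ε)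

/-- An adjointable operator on the self-dual dual module `X'`. -/
def IsAdjointableOnDual (ip : X → X → B) (ip' : (X → B) → (X → B) → B)
    (T : (X → B) → (X → B)) : Prop :=
  (∀ f : X → B, IsBddModMap ip f → IsBddModMap ip (T f)) ∧
  (∀ f g : X → B, IsBddModMap ip f → IsBddModMap ip g → T (f + g) = T f + T g) ∧
  (∃ S : (X → B) → (X → B), (∀ f, IsBddModMap ip f → IsBddModMap ip (S f)) ∧
    ∀ f g : X → B, IsBddModMap ip f → IsBddModMap ip g → ip' (T f) g = ip' f (S g))

end HilbertModules

/-- A bundled complex Hilbert space. -/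
structure HilbertCat.{w} where
  X : Type w
  [grp : NormedAddCommGroup X]
  [ips : InnerProductSpace ℂ X]
  [cs : CompleteSpace X]

attribute [instance] HilbertCat.grp HilbertCat.ips HilbertCat.cs

/-- A bundled right `B`-module carrying also a `ℂ`-module structure. -/
structure RightModuleCat.{w, w'} (B : Type w') [Ring B] where
  X : Type w
  [grp : AddCommGroup X]
  [modC : Module ℂ X]
  [modB : Module Bᵐᵒᵖ X]

attribute [instance] RightModuleCat.grp RightModuleCat.modC RightModuleCat.modB

section PaschkeRN

variable {A H X : Type*} [CStarAlgebra A]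
  [NormedAddCommGroup H] [InnerProductSpace ℂ H] [CompleteSpace H]
  [AddCommGroup X] [Module ℂ X] [Module (H →L[ℂ] H)ᵐᵒᵖ X]

/-- The canonical embedding `X → X'`, `x ↦ x̂ = ⟨·, x⟩`. -/
def hatvec (ip : X → X → (H →L[ℂ] H)) (x : X) : X → (H →L[ℂ] H) := fun y => ip y x

/-- `T` is a positive contraction in the commutant `σ̃(A)' ⊆ P(X')`:
`T` is adjointable on the self-dual completion, commutes with the extended representation
`σ̃` (where `σ̃(a) f = f ∘ σ(a*)`), and `0 ≤ T ≤ 1`. -/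
def DualContraction (ip : X → X → (H →L[ℂ] H))
    (ip' : (X → (H →L[ℂ] H)) → (X → (H →L[ℂ] H)) → (H →L[ℂ] H)) (σ : A → X → X)
    (T : (X → (H →L[ℂ] H)) → (X → (H →L[ℂ] H))) : Prop :=
  IsAdjointableOnDual ip ip' T ∧
  (∀ (a : A) (f : X → (H →L[ℂ] H)), IsBddModMap ip f →
      T (fun y => f (σ (star a) y)) = fun y => T f (σ (star a) y)) ∧
  (∀ f : X → (H →L[ℂ] H), IsBddModMap ip f → 0 ≤ ip' (T f) f ∧ 0 ≤ ip' (f - T f) f)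

/-- The Radon–Nikodym derivative map in Paschke's setting: `φ_T(a) = ⟨T σ̃(a) ê, ê⟩`. -/
def paschkeRN (ip : X → X → (H →L[ℂ] H))
    (ip' : (X → (H →L[ℂ] H)) → (X → (H →L[ℂ] H)) → (H →L[ℂ] H)) (σ : A → X → X) (e : X)
    (T : (X → (H →L[ℂ] H)) → (X → (H →L[ℂ] H))) : A → (H →L[ℂ] H) :=
  fun a => ip' (T (hatvec ip (σ a e))) (hatvec ip e)

end PaschkeRN

section PaschkeInv

variable {G A H X : Type*} [Group G] [CStarAlgebra A]
  [NormedAddCommGroup H] [InnerProductSpace ℂ H] [CompleteSpace H]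
  [AddCommGroup X] [Module ℂ X] [Module (H →L[ℂ] H)ᵐᵒᵖ X]

/-- The submodule `X_g`, the closed span of `σ(A_{g⁻¹})(e B(H))`. -/
def Xsub (τ : CStarPartialAction G A) (ip : X → X → (H →L[ℂ] H)) (σ : A → X → X) (e : X)
    (g : G) : Set X :=
  {x | InClosedSpan ip {z | ∃ a ∈ τ.ideal g⁻¹, ∃ S : H →L[ℂ] H, z = σ a (op S • e)} x}

/-- The operators appearing in the invariant Radon–Nikodym theorem (Paschke version):
positive contractions `T` in the commutant `σ̃(A)'` with `T(Y_g) ⊆ Y_g` and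
`T W̃_g|_{Y_{g⁻¹}} = W̃_g T|_{Y_{g⁻¹}}` for all `g`, where `Y_{g⁻¹} = {σ̃(a) ê : a ∈ A_g}`
and `W̃_g` is the extension of `W_g`, determined on `Y_{g⁻¹}` by
`W̃_g (σ̃(a) ê) = σ̃(τ_{g⁻¹}(a)) ê`. -/
def InvDualOperator (τ : CStarPartialAction G A) (ip : X → X → (H →L[ℂ] H))
    (ip' : (X → (H →L[ℂ] H)) → (X → (H →L[ℂ] H)) → (H →L[ℂ] H)) (σ : A → X → X) (e : X)
    (T : (X → (H →L[ℂ] H)) → (X → (H →L[ℂ] H))) : Prop :=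
  DualContraction ip ip' σ T ∧
  (∀ g : G, ∀ a ∈ τ.ideal g⁻¹, ∃ a' ∈ τ.ideal g⁻¹,
      T (hatvec ip (σ a e)) = hatvec ip (σ a' e)) ∧
  (∀ g : G, ∀ a ∈ τ.ideal g, ∀ a' ∈ τ.ideal g,
      T (hatvec ip (σ a e)) = hatvec ip (σ a' e) →
      T (hatvec ip (σ (τ.τ g⁻¹ a) e)) = hatvec ip (σ (τ.τ g⁻¹ a') e))

/-- `C^P_φ`: combinations `α₁ T₁ + α₂ T₂` with `αᵢ ∈ [-1,1]` and `Tᵢ` invariant operators. -/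
def CPphiSet (τ : CStarPartialAction G A) (ip : X → X → (H →L[ℂ] H))
    (ip' : (X → (H →L[ℂ] H)) → (X → (H →L[ℂ] H)) → (H →L[ℂ] H)) (σ : A → X → X) (e : X) :
    Set ((X → (H →L[ℂ] H)) → (X → (H →L[ℂ] H))) :=
  {T | ∃ (α₁ α₂ : ℝ) (T₁ T₂ : (X → (H →L[ℂ] H)) → (X → (H →L[ℂ] H))),
    α₁ ∈ Set.Icc (-1 : ℝ) 1 ∧ α₂ ∈ Set.Icc (-1 : ℝ) 1 ∧
    InvDualOperator τ ip ip' σ e T₁ ∧ InvDualOperator τ ip ip' σ e T₂ ∧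
    T = fun f => (α₁ : ℂ) • T₁ f + (α₂ : ℂ) • T₂ f}

end PaschkeInv

lemma pi_apply_mem_Kspace (τ : CStarPartialAction G A) (π : A →⋆ₐ[ℂ] (K →L[ℂ] K))
    (V : H →L[ℂ] K) (a : A) (g : G) {x : K} (hx : x ∈ Kspace τ π V g) :
    π a x ∈ Kspace τ π V g := by
  set S : Set K := {x : K | ∃ b ∈ τ.ideal g⁻¹, ∃ h : H, x = π b (V h)} with hS
  have hspan : Set.MapsTo (π a) ((Submodule.span ℂ S : Submodule ℂ K) : Set K)
      ((Submodule.span ℂ S : Submodule ℂ K) : Set K) := by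
    intro z hz
    simp only [SetLike.mem_coe] at hz ⊢
    induction hz using Submodule.span_induction with
    | mem z hz =>
      obtain ⟨b, hb, h, rfl⟩ := hz
      apply Submodule.subset_span
      refine ⟨a * b, τ.mul_mem_left _ a b hb, h, ?_⟩
      rw [map_mul]; rfl
    | zero => simpa using (Submodule.span ℂ S).zero_mem
    | add z w _ _ hz hw => rw [map_add]; exact (Submodule.span ℂ S).add_mem hz hw
    | smul c z _ hz => rw [map_smul]; exact (Submodule.span ℂ S).smul_mem c hz
  have hx' : x ∈ closure ((Submodule.span ℂ S : Submodule ℂ K) : Set K) := by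
    rw [← Submodule.topologicalClosure_coe]; exact hx
  have := map_mem_closure (π a).continuous hx' hspan
  rw [← Submodule.topologicalClosure_coe] at this
  exact this

theorem key_covariance (τ : CStarPartialAction G A) (π : A →⋆ₐ[ℂ] (K →L[ℂ] K))
    (V : H →L[ℂ] K) (U : ∀ g : G, (Kspace τ π V g⁻¹) ≃ₗᵢ[ℂ] (Kspace τ π V g))
    (hU : DeterminedU τ π V U) (g : G) (a : A) (ha : a ∈ τ.ideal g) :
    ∀ (w y : Kspace τ π V g⁻¹), (y : K) = π a (w : K) →
      (U g y : K) = π (τ.τ g⁻¹ a) ((U g w : K)) := by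
  set Km := Kspace τ π V g⁻¹ with hKm
  set Kg := Kspace τ π V g with hKg
  set S : Set K := {x : K | ∃ b ∈ τ.ideal g⁻¹⁻¹, ∃ h : H, x = π b (V h)} with hS
  have hle : Submodule.span ℂ S ≤ Km := Submodule.le_topologicalClosure _
  -- the restricted multiplication operator
  have hmem : ∀ w : Km, π a (w : K) ∈ Km := fun w => pi_apply_mem_Kspace τ π V a g⁻¹ w.2
  let πres : Km →L[ℂ] Km :=
    ((π a).comp Km.subtypeL).codRestrict Km (fun w => hmem w)
  let Ugl : Km →L[ℂ] K := Kg.subtypeL.comp (U g).toLinearIsometry.toContinuousLinearMap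
  let Φ₁ : Km →L[ℂ] K := Ugl.comp πres
  let Φ₂ : Km →L[ℂ] K := (π (τ.τ g⁻¹ a)).comp Ugl
  have hgen : ∀ z (hz : z ∈ Submodule.span ℂ S), Φ₁ ⟨z, hle hz⟩ = Φ₂ ⟨z, hle hz⟩ := by
    intro z hz
    induction hz using Submodule.span_induction with
    | mem z hz =>
      obtain ⟨b, hb, h, rfl⟩ := hz
      rw [inv_inv] at hb
      have hab : a * b ∈ τ.ideal g := τ.mul_mem_left g a b hb
      have h1 : (πres ⟨π b (V h), hle (Submodule.subset_span ⟨b, by rwa [inv_inv], h, rfl⟩)⟩ : K)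
          = π (a * b) (V h) := by
        simp only [πres, ContinuousLinearMap.coe_codRestrict_apply,
          ContinuousLinearMap.comp_apply, Submodule.subtypeL_apply, map_mul]
        rfl
      have e1 : Φ₁ ⟨π b (V h), hle (Submodule.subset_span ⟨b, by rwa [inv_inv], h, rfl⟩)⟩
          = π (τ.τ g⁻¹ (a * b)) (V h) := by
        simp only [Φ₁, ContinuousLinearMap.comp_apply]
        exact hU g (a * b) hab h _ h1
      have e2 : Φ₂ ⟨π b (V h), hle (Submodule.subset_span ⟨b, by rwa [inv_inv], h, rfl⟩)⟩
          = π (τ.τ g⁻¹ (a * b)) (V h) := by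
        simp only [Φ₂, ContinuousLinearMap.comp_apply]
        have e3 : (Ugl ⟨π b (V h), hle (Submodule.subset_span ⟨b, by rwa [inv_inv], h, rfl⟩)⟩ : K)
            = π (τ.τ g⁻¹ b) (V h) := hU g b hb h _ rfl
        rw [e3]
        have hmul : τ.τ g⁻¹ (a * b) = τ.τ g⁻¹ a * τ.τ g⁻¹ b :=
          τ.map_mul g⁻¹ a (by rwa [inv_inv]) b (by rwa [inv_inv])
        rw [hmul, map_mul]; rfl
      rw [e1, e2]
    | zero =>
      have : (⟨(0 : K), hle (Submodule.span ℂ S).zero_mem⟩ : Km) = 0 := by ext; rfl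
      rw [this, map_zero, map_zero]
    | add z w hz hw ihz ihw =>
      have : (⟨z + w, hle ((Submodule.span ℂ S).add_mem hz hw)⟩ : Km)
          = ⟨z, hle hz⟩ + ⟨w, hle hw⟩ := by ext; rfl
      rw [this, map_add, map_add, ihz, ihw]
    | smul c z hz ihz =>
      have : (⟨c • z, hle ((Submodule.span ℂ S).smul_mem c hz)⟩ : Km)
          = c • (⟨z, hle hz⟩ : Km) := by ext; rfl
      rw [this, map_smul, map_smul, ihz]
  -- density
  have hdense : Dense {w : Km | (w : K) ∈ Submodule.span ℂ S} := by
    intro w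
    rw [closure_subtype]
    have himg : Subtype.val '' {w : Km | (w : K) ∈ Submodule.span ℂ S}
        = ((Submodule.span ℂ S : Submodule ℂ K) : Set K) := by
      ext z
      constructor
      · rintro ⟨v, hv, rfl⟩; exact hv
      · intro hz; exact ⟨⟨z, hle hz⟩, hz, rfl⟩
    rw [himg]
    exact w.2
  have heq : (Φ₁ : Km → K) = Φ₂ :=
    Continuous.ext_on hdense Φ₁.continuous Φ₂.continuous
      (fun w hw => by
        have : w = ⟨(w : K), hle hw⟩ := by ext; rfl
        rw [this]; exact hgen _ hw)
  intro w y hy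
  have hyw : y = πres w := by
    apply Subtype.ext
    rw [hy]; rfl
  have h1 : (U g y : K) = Φ₁ w := by rw [hyw]; rfl
  have h2 : π (τ.τ g⁻¹ a) ((U g w : K)) = Φ₂ w := rfl
  rw [h1, h2, heq]

/-- For the induced partial action on the Stinespring dilation space:
`U_g π(a) U_g* = π(τ_{g⁻¹}(a))|_{K_g}` for all `g ∈ G` and `a ∈ A_g`. -/
theorem induced_partialAction_covariance {G A H K : Type*} [Group G] [CStarAlgebra A]
    [NormedAddCommGroup H] [InnerProductSpace ℂ H] [CompleteSpace H]
    [NormedAddCommGroup K] [InnerProductSpace ℂ K] [CompleteSpace K]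
    (τ : CStarPartialAction G A) (φ : A →ₗ[ℂ] (H →L[ℂ] H)) (hφ : φ ∈ UCPInvSet τ H)
    (π : A →⋆ₐ[ℂ] (K →L[ℂ] K)) (V : H →L[ℂ] K) (hmin : IsMinimalStinespring φ π V)
    (U : ∀ g : G, (Kspace τ π V g⁻¹) ≃ₗᵢ[ℂ] (Kspace τ π V g)) (hU : DeterminedU τ π V U) :
    ∀ g : G, ∀ a ∈ τ.ideal g, ∀ (x : Kspace τ π V g) (y : Kspace τ π V g⁻¹),
      (y : K) = π a ((U g).symm x : K) → (U g y : K) = π (τ.τ g⁻¹ a) (x : K) := by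
  intro g a ha x y hy
  have h := key_covariance τ π V U hU g a ha ((U g).symm x) y hy
  rwa [(U g).apply_symm_apply] at h
end
end

section
/- Let φ ∈ UCP^{G_τ}(A, B(H)) with Paschke dilation (X, σ, e) and induced partial action ({X_g}, {W_g}) on the Hilbert B(H)-module X, where X_{g^{-1}} = closed span of σ(A_g)(eB(H)) and W_g(σ(a)eS) = σ(τ_{g^{-1}}(a))eS. Then for all g ∈ G and a ∈ A_g, W_g σ(a) W_g* = σ(τ_{g^{-1}}(a)) restricted to X_g. -/
open scoped ComplexOrder
open ContinuousLinearMap MulOpposite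

noncomputable section

variable {G A H K : Type*} [Group G] [CStarAlgebra A]
  [NormedAddCommGroup H] [InnerProductSpace ℂ H] [CompleteSpace H]
  [NormedAddCommGroup K] [InnerProductSpace ℂ K] [CompleteSpace K]

set_option linter.unusedSectionVars false
section AuxCovariance

variable {A H X : Type*} [CStarAlgebra A]
  [NormedAddCommGroup H] [InnerProductSpace ℂ H] [CompleteSpace H]
  [AddCommGroup X] [Module ℂ X] [Module (H →L[ℂ] H)ᵐᵒᵖ X]

/-- Sum of generators `σ(b)(e·S)` indexed by a list. -/
def auxSum (σ : A → X → X) (e : X) (l : List (A × (H →L[ℂ] H))) : X :=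
  (l.map fun p => σ p.1 (op p.2 • e)).sum

variable {ip : X → X → (H →L[ℂ] H)} {σ : A → X → X} {e : X}

lemma auxSum_nil : auxSum σ e ([] : List (A × (H →L[ℂ] H))) = 0 := rfl

lemma auxSum_cons (p : A × (H →L[ℂ] H)) (l : List (A × (H →L[ℂ] H))) :
    auxSum σ e (p :: l) = σ p.1 (op p.2 • e) + auxSum σ e l := by
  simp [auxSum]

lemma auxSum_append (l₁ l₂ : List (A × (H →L[ℂ] H))) :
    auxSum σ e (l₁ ++ l₂) = auxSum σ e l₁ + auxSum σ e l₂ := by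
  simp [auxSum]

lemma aux_ip_zero_left (hpre : IsPreHilbertModule ip) (y : X) : ip 0 y = 0 := by
  have h := hpre.add_left 0 0 y
  rw [add_zero] at h
  exact left_eq_add.mp h

lemma aux_ip_zero_right (hpre : IsPreHilbertModule ip) (y : X) : ip y 0 = 0 := by
  rw [hpre.star_inner, aux_ip_zero_left hpre, star_zero]

lemma aux_ip_add_right (hpre : IsPreHilbertModule ip) (x y z : X) :
    ip x (y + z) = ip x y + ip x z := by
  rw [hpre.star_inner, hpre.add_left, star_add, ← hpre.star_inner, ← hpre.star_inner]

lemma aux_ip_neg_left (hpre : IsPreHilbertModule ip) (x y : X) : ip (-x) y = -ip x y := by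
  have h := hpre.add_left x (-x) y
  rw [add_neg_cancel, aux_ip_zero_left hpre] at h
  rw [eq_neg_iff_add_eq_zero, add_comm]
  exact h.symm

lemma aux_ip_neg_right (hpre : IsPreHilbertModule ip) (x y : X) : ip x (-y) = -ip x y := by
  rw [hpre.star_inner, aux_ip_neg_left hpre, star_neg, ← hpre.star_inner]

lemma aux_ip_expand (hpre : IsPreHilbertModule ip) (u v : X) :
    ip (u - v) (u - v) + ip (u + v) (u + v) = (ip u u + ip v v) + (ip u u + ip v v) := by
  have h1 : ∀ w z : X, ip (w + z) (w + z) = ip w w + ip w z + (ip z w + ip z z) := by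
    intro w z
    rw [hpre.add_left, aux_ip_add_right hpre, aux_ip_add_right hpre]
  rw [sub_eq_add_neg, h1, h1, aux_ip_neg_left hpre, aux_ip_neg_left hpre,
    aux_ip_neg_right hpre, aux_ip_neg_right hpre, neg_neg]
  abel

lemma aux_ip_pos (hpre : IsPreHilbertModule ip) (w : X) : 0 ≤ ip w w := by
  obtain ⟨c, hc⟩ := hpre.pos w
  rw [hc]
  exact star_mul_self_nonneg c

lemma aux_sigma_add (hrep : IsStarRepresentation ip σ) (a : A) (x y : X) :
    σ a (x + y) = σ a x + σ a y := (hrep.1 a).1 x y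

lemma aux_sigma_zero (hrep : IsStarRepresentation ip σ) (a : A) : σ a 0 = 0 := by
  have h := aux_sigma_add hrep a 0 0
  rw [add_zero] at h
  exact (left_eq_add.mp h)

lemma aux_sigma_neg (hrep : IsStarRepresentation ip σ) (a : A) (x : X) :
    σ a (-x) = -σ a x := by
  have h := aux_sigma_add hrep a x (-x)
  rw [add_neg_cancel, aux_sigma_zero hrep] at h
  rw [eq_neg_iff_add_eq_zero, add_comm]
  exact h.symm

lemma aux_sigma_sub (hrep : IsStarRepresentation ip σ) (a : A) (x y : X) :
    σ a (x - y) = σ a x - σ a y := by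
  rw [sub_eq_add_neg, aux_sigma_add hrep, aux_sigma_neg hrep, sub_eq_add_neg]

lemma aux_sigma_auxSum (hrep : IsStarRepresentation ip σ) (a : A)
    (l : List (A × (H →L[ℂ] H))) :
    σ a (auxSum σ e l) = auxSum σ e (l.map fun p => (a * p.1, p.2)) := by
  induction l with
  | nil => simpa [auxSum] using aux_sigma_zero hrep a
  | cons p l ih =>
    rw [auxSum_cons, aux_sigma_add hrep, ih, List.map_cons, auxSum_cons,
      ← hrep.2.2.2.2.1 a p.1]

lemma aux_smul_auxSum (hrep : IsStarRepresentation ip σ) (c : ℂ)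
    (l : List (A × (H →L[ℂ] H))) :
    c • auxSum σ e l = auxSum σ e (l.map fun p => (c • p.1, p.2)) := by
  induction l with
  | nil => simp [auxSum]
  | cons p l ih =>
    rw [auxSum_cons, smul_add, ih, List.map_cons, auxSum_cons, hrep.2.2.2.1 c p.1]

lemma aux_auxSum_mem_span (I : Submodule ℂ A) (l : List (A × (H →L[ℂ] H)))
    (hl : ∀ p ∈ l, p.1 ∈ I) :
    auxSum σ e l ∈ Submodule.span ℂ {z : X | ∃ b ∈ I, ∃ S : H →L[ℂ] H, z = σ b (op S • e)} := by
  induction l with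
  | nil => simpa [auxSum] using Submodule.zero_mem _
  | cons p l ih =>
    rw [auxSum_cons]
    refine Submodule.add_mem _ (Submodule.subset_span ?_) (ih fun q hq => hl q (List.mem_cons_of_mem p hq))
    exact ⟨p.1, hl p (List.mem_cons_self), p.2, rfl⟩

lemma aux_span_listRep (hrep : IsStarRepresentation ip σ) (I : Submodule ℂ A) {y : X}
    (hy : y ∈ Submodule.span ℂ {z : X | ∃ b ∈ I, ∃ S : H →L[ℂ] H, z = σ b (op S • e)}) :
    ∃ l : List (A × (H →L[ℂ] H)), (∀ p ∈ l, p.1 ∈ I) ∧ y = auxSum σ e l := by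
  induction hy using Submodule.span_induction with
  | mem z hz =>
    obtain ⟨b, hb, S, rfl⟩ := hz
    exact ⟨[(b, S)], by simpa using hb, by simp [auxSum]⟩
  | zero => exact ⟨[], by simp, by simp [auxSum]⟩
  | add x y _ _ ihx ihy =>
    obtain ⟨l₁, h₁, rfl⟩ := ihx
    obtain ⟨l₂, h₂, rfl⟩ := ihy
    refine ⟨l₁ ++ l₂, ?_, (auxSum_append l₁ l₂).symm⟩
    intro p hp
    rcases List.mem_append.mp hp with h | h
    · exact h₁ p h
    · exact h₂ p h
  | smul c x _ ih =>
    obtain ⟨l, h₁, rfl⟩ := ih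
    refine ⟨l.map fun p => (c • p.1, p.2), ?_, ?_⟩
    · intro p hp
      obtain ⟨q, hq, rfl⟩ := List.mem_map.mp hp
      exact I.smul_mem c (h₁ q hq)
    · exact aux_smul_auxSum hrep c l

end AuxCovariance

/-- For the induced partial action `({X_g}, {W_g})` on the Paschke dilation module:
`W_g σ(a) W_g* = σ(τ_{g⁻¹}(a))|_{X_g}` for all `g ∈ G` and `a ∈ A_g`.  Here `W_g` is the
Hilbert module isomorphism `X_{g⁻¹} → X_g` determined by
`W_g(σ(a)(e S)) = σ(τ_{g⁻¹}(a))(e S)` for `a ∈ A_g`, `S ∈ B(H)`. -/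
theorem induced_partialAction_covariance_module {G A H X : Type*} [Group G] [CStarAlgebra A]
    [NormedAddCommGroup H] [InnerProductSpace ℂ H] [CompleteSpace H]
    [AddCommGroup X] [Module ℂ X] [Module (H →L[ℂ] H)ᵐᵒᵖ X]
    (τ : CStarPartialAction G A) (φ : A →ₗ[ℂ] (H →L[ℂ] H)) (hφ : φ ∈ UCPInvSet τ H)
    (ip : X → X → (H →L[ℂ] H)) (σ : A → X → X) (e : X) (hdil : IsPaschkeDilation ip σ e ⇑φ)
    (W : G → X → X)
    -- `W_g` is determined by the displayed formula:
    (hW : ∀ g : G, ∀ a ∈ τ.ideal g, ∀ S : H →L[ℂ] H,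
      W g (σ a (op S • e)) = σ (τ.τ g⁻¹ a) (op S • e))
    -- `W_g` is a Hilbert module isomorphism `X_{g⁻¹} → X_g`:
    (hWbij : ∀ g : G, Set.BijOn (W g) (Xsub τ ip σ e g⁻¹) (Xsub τ ip σ e g))
    (hWadd : ∀ g : G, ∀ x ∈ Xsub τ ip σ e g⁻¹, ∀ y ∈ Xsub τ ip σ e g⁻¹,
      W g (x + y) = W g x + W g y)
    (hWsmul : ∀ g : G, ∀ (c : ℂ), ∀ x ∈ Xsub τ ip σ e g⁻¹, W g (c • x) = c • W g x)
    (hWmod : ∀ g : G, ∀ (b : H →L[ℂ] H), ∀ x ∈ Xsub τ ip σ e g⁻¹,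
      W g (op b • x) = op b • W g x)
    (hWinner : ∀ g : G, ∀ x ∈ Xsub τ ip σ e g⁻¹, ∀ y ∈ Xsub τ ip σ e g⁻¹,
      ip (W g x) (W g y) = ip x y)
    -- `W_{g⁻¹}` is the inverse (= adjoint) of `W_g`:
    (hWinv : ∀ g : G, ∀ x ∈ Xsub τ ip σ e g⁻¹, W g⁻¹ (W g x) = x) :
    ∀ g : G, ∀ a ∈ τ.ideal g, ∀ x ∈ Xsub τ ip σ e g,
      W g (σ a (W g⁻¹ x)) = σ (τ.τ g⁻¹ a) x := by
  obtain ⟨hpre, -, hrep, -, -⟩ := hdil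
  intro g a ha x hx
  -- elements of the span lie in `Xsub`
  have span_Xsub : ∀ h : G, ∀ y ∈ Submodule.span ℂ
      {z : X | ∃ b ∈ τ.ideal h⁻¹, ∃ S : H →L[ℂ] H, z = σ b (op S • e)},
      y ∈ Xsub τ ip σ e h := by
    intro h y hy
    intro ε hε
    refine ⟨y, hy, ?_⟩
    simpa [sub_self, aux_ip_zero_left hpre] using hε
  have listrep_Xsub : ∀ h : G, ∀ l : List (A × (H →L[ℂ] H)),
      (∀ p ∈ l, p.1 ∈ τ.ideal h⁻¹) → auxSum σ e l ∈ Xsub τ ip σ e h := by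
    intro h l hl
    exact span_Xsub h _ (aux_auxSum_mem_span (τ.ideal h⁻¹) l hl)
  -- approximation of elements of `Xsub` by list sums of generators
  have approx : ∀ h : G, ∀ w ∈ Xsub τ ip σ e h, ∀ ε > (0:ℝ),
      ∃ l : List (A × (H →L[ℂ] H)), (∀ p ∈ l, p.1 ∈ τ.ideal h⁻¹) ∧
        ‖ip (w - auxSum σ e l) (w - auxSum σ e l)‖ < ε := by
    intro h w hw ε hε
    obtain ⟨y, hy, hlt⟩ := hw ε hε
    obtain ⟨l, hl, rfl⟩ := aux_span_listRep hrep (τ.ideal h⁻¹) hy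
    exact ⟨l, hl, hlt⟩
  have sub_Xsub : ∀ h : G, ∀ w ∈ Xsub τ ip σ e h, ∀ l : List (A × (H →L[ℂ] H)),
      (∀ p ∈ l, p.1 ∈ τ.ideal h⁻¹) → w - auxSum σ e l ∈ Xsub τ ip σ e h := by
    intro h w hw l hl ε hε
    obtain ⟨y, hy, hlt⟩ := hw ε hε
    refine ⟨y - auxSum σ e l,
      Submodule.sub_mem _ hy (aux_auxSum_mem_span (τ.ideal h⁻¹) l hl), ?_⟩
    have hrw : w - auxSum σ e l - (y - auxSum σ e l) = w - y := by abel
    rw [hrw]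
    exact hlt
  -- `σ a'` preserves each `Xsub`
  have sigma_Xsub : ∀ (a' : A) (h : G), ∀ w ∈ Xsub τ ip σ e h,
      σ a' w ∈ Xsub τ ip σ e h := by
    intro a' h w hw ε hε
    obtain ⟨C, hC⟩ := (hrep.1 a').2.1
    have hC'pos : (0:ℝ) < max C 1 := lt_of_lt_of_le one_pos (le_max_right _ _)
    obtain ⟨l, hl, hlt⟩ := approx h w hw (ε / max C 1) (by positivity)
    refine ⟨auxSum σ e (l.map fun p => (a' * p.1, p.2)), ?_, ?_⟩
    · refine aux_auxSum_mem_span (τ.ideal h⁻¹) _ ?_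
      intro p hp
      obtain ⟨q, hq, rfl⟩ := List.mem_map.mp hp
      exact τ.mul_mem_left h⁻¹ a' q.1 (hl q hq)
    · have heq : σ a' w - auxSum σ e (l.map fun p => (a' * p.1, p.2))
          = σ a' (w - auxSum σ e l) := by
        rw [aux_sigma_sub hrep, aux_sigma_auxSum hrep]
      rw [heq]
      calc ‖ip (σ a' (w - auxSum σ e l)) (σ a' (w - auxSum σ e l))‖
          ≤ C * ‖ip (w - auxSum σ e l) (w - auxSum σ e l)‖ := hC _
        _ ≤ max C 1 * ‖ip (w - auxSum σ e l) (w - auxSum σ e l)‖ :=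
            mul_le_mul_of_nonneg_right (le_max_left _ _) (norm_nonneg _)
        _ < max C 1 * (ε / max C 1) := mul_lt_mul_of_pos_left hlt hC'pos
        _ = ε := by field_simp
  -- specialized versions of the `W` hypotheses at `g⁻¹`, rewritten via `inv_inv`
  have hWinvadd : ∀ u ∈ Xsub τ ip σ e g, ∀ v ∈ Xsub τ ip σ e g,
      W g⁻¹ (u + v) = W g⁻¹ u + W g⁻¹ v := by
    have h := hWadd g⁻¹
    rwa [inv_inv] at h
  have hWinvmap : ∀ u ∈ Xsub τ ip σ e g, W g⁻¹ u ∈ Xsub τ ip σ e g⁻¹ := by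
    have h := (hWbij g⁻¹).mapsTo
    rw [inv_inv] at h
    exact fun u hu => h hu
  have hWinvinner : ∀ u ∈ Xsub τ ip σ e g, ∀ v ∈ Xsub τ ip σ e g,
      ip (W g⁻¹ u) (W g⁻¹ v) = ip u v := by
    have h := hWinner g⁻¹
    rwa [inv_inv] at h
  have hWinvgen : ∀ b ∈ τ.ideal g⁻¹, ∀ S : H →L[ℂ] H,
      W g⁻¹ (σ b (op S • e)) = σ (τ.τ g b) (op S • e) := by
    have h := hW g⁻¹
    rwa [inv_inv] at h
  have hτmaps : ∀ h : G, ∀ b ∈ τ.ideal h⁻¹, τ.τ h b ∈ τ.ideal h :=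
    fun h b hb => (τ.bijOn h).mapsTo hb
  -- zero values
  have hzero_g : (0:X) ∈ Xsub τ ip σ e g := span_Xsub g 0 (Submodule.zero_mem _)
  have hzero_ginv : (0:X) ∈ Xsub τ ip σ e g⁻¹ := span_Xsub g⁻¹ 0 (Submodule.zero_mem _)
  have hWinv0 : W g⁻¹ 0 = 0 := by
    have h := hWinvadd 0 hzero_g 0 hzero_g
    rw [add_zero] at h
    exact left_eq_add.mp h
  have hW0 : W g 0 = 0 := by
    have h := hWadd g 0 hzero_ginv 0 hzero_ginv
    rw [add_zero] at h
    exact left_eq_add.mp h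
  -- the key computation on a single generator
  have keygen : ∀ b ∈ τ.ideal g⁻¹, ∀ S : H →L[ℂ] H,
      W g (σ a (W g⁻¹ (σ b (op S • e)))) = σ (τ.τ g⁻¹ a) (σ b (op S • e)) := by
    intro b hb S
    have hgb : τ.τ g b ∈ τ.ideal g := hτmaps g b hb
    rw [hWinvgen b hb S, ← hrep.2.2.2.2.1 a (τ.τ g b),
      hW g _ (τ.mul_mem_left g a _ hgb) S]
    have h1 : τ.τ g⁻¹ (a * τ.τ g b) = τ.τ g⁻¹ a * τ.τ g⁻¹ (τ.τ g b) :=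
      τ.map_mul g⁻¹ a (by rwa [inv_inv]) _ (by rwa [inv_inv])
    have h2 : τ.τ g⁻¹ (τ.τ g b) = b := by
      have h3 := τ.comp g⁻¹ g b hb (by rw [inv_inv]; exact hgb)
      rw [h3, inv_mul_cancel, τ.τ_one]
    rw [h1, h2, hrep.2.2.2.2.1]
  -- the key computation on list sums of generators
  have keysum : ∀ l : List (A × (H →L[ℂ] H)), (∀ p ∈ l, p.1 ∈ τ.ideal g⁻¹) →
      W g (σ a (W g⁻¹ (auxSum σ e l))) = σ (τ.τ g⁻¹ a) (auxSum σ e l) := by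
    intro l hl
    induction l with
    | nil =>
      rw [auxSum_nil, hWinv0, aux_sigma_zero hrep, hW0, aux_sigma_zero hrep]
    | cons p l ih =>
      have hp := hl p (List.mem_cons_self)
      have hlt := fun q hq => hl q (List.mem_cons_of_mem p hq)
      have hgen : σ p.1 (op p.2 • e) ∈ Xsub τ ip σ e g :=
        span_Xsub g _ (Submodule.subset_span ⟨p.1, hp, p.2, rfl⟩)
      have hWgen : W g⁻¹ (σ p.1 (op p.2 • e)) ∈ Xsub τ ip σ e g⁻¹ :=
        hWinvmap _ hgen
      have hsum : auxSum σ e l ∈ Xsub τ ip σ e g := listrep_Xsub g l hlt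
      have m1 : σ a (W g⁻¹ (σ p.1 (op p.2 • e))) ∈ Xsub τ ip σ e g⁻¹ :=
        sigma_Xsub a g⁻¹ _ hWgen
      have m2 : σ a (W g⁻¹ (auxSum σ e l)) ∈ Xsub τ ip σ e g⁻¹ :=
        sigma_Xsub a g⁻¹ _ (hWinvmap _ hsum)
      rw [auxSum_cons, hWinvadd _ hgen _ hsum, aux_sigma_add hrep,
        hWadd g _ m1 _ m2, keygen p.1 hp p.2, ih hlt, aux_sigma_add hrep]
  -- reduce to vanishing of the inner product of the difference with itself
  have hnorm : ∀ ε > (0:ℝ),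
      ‖ip (W g (σ a (W g⁻¹ x)) - σ (τ.τ g⁻¹ a) x)
        (W g (σ a (W g⁻¹ x)) - σ (τ.τ g⁻¹ a) x)‖ < ε := by
    intro ε hε
    obtain ⟨C1, hC1⟩ := (hrep.1 a).2.1
    obtain ⟨C2, hC2⟩ := (hrep.1 (τ.τ g⁻¹ a)).2.1
    have hK : (0:ℝ) < 2 * |C1| + 2 * |C2| + 1 := by positivity
    obtain ⟨l, hl, hlt⟩ := approx g x hx (ε / (2 * |C1| + 2 * |C2| + 1)) (by positivity)
    set y := auxSum σ e l with hydef
    set z := x - y with hzdef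
    have hyX : y ∈ Xsub τ ip σ e g := listrep_Xsub g l hl
    have hzX : z ∈ Xsub τ ip σ e g := sub_Xsub g x hx l hl
    have hxzy : x = z + y := by rw [hzdef]; abel
    have hzinv : W g⁻¹ z ∈ Xsub τ ip σ e g⁻¹ := hWinvmap z hzX
    have m1 : σ a (W g⁻¹ z) ∈ Xsub τ ip σ e g⁻¹ := sigma_Xsub a g⁻¹ _ hzinv
    have m2 : σ a (W g⁻¹ y) ∈ Xsub τ ip σ e g⁻¹ :=
      sigma_Xsub a g⁻¹ _ (hWinvmap y hyX)
    have hdecomp : W g (σ a (W g⁻¹ x)) - σ (τ.τ g⁻¹ a) x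
        = W g (σ a (W g⁻¹ z)) - σ (τ.τ g⁻¹ a) z := by
      conv_lhs => rw [hxzy]
      rw [hWinvadd z hzX y hyX, aux_sigma_add hrep, hWadd g _ m1 _ m2,
        keysum l hl, aux_sigma_add hrep]
      abel
    rw [hdecomp]
    -- bound the two pieces
    have hb1 : ‖ip (W g (σ a (W g⁻¹ z))) (W g (σ a (W g⁻¹ z)))‖ ≤ |C1| * ‖ip z z‖ := by
      rw [hWinner g _ m1 _ m1]
      calc ‖ip (σ a (W g⁻¹ z)) (σ a (W g⁻¹ z))‖
          ≤ C1 * ‖ip (W g⁻¹ z) (W g⁻¹ z)‖ := hC1 _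
        _ = C1 * ‖ip z z‖ := by rw [hWinvinner z hzX z hzX]
        _ ≤ |C1| * ‖ip z z‖ := mul_le_mul_of_nonneg_right (le_abs_self C1) (norm_nonneg _)
    have hb2 : ‖ip (σ (τ.τ g⁻¹ a) z) (σ (τ.τ g⁻¹ a) z)‖ ≤ |C2| * ‖ip z z‖ :=
      (hC2 z).trans (mul_le_mul_of_nonneg_right (le_abs_self C2) (norm_nonneg _))
    set u' := W g (σ a (W g⁻¹ z)) with hu'def
    set v' := σ (τ.τ g⁻¹ a) z with hv'def
    have hexp := aux_ip_expand hpre u' v'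
    have hle : ip (u' - v') (u' - v')
        ≤ (ip u' u' + ip v' v') + (ip u' u' + ip v' v') := by
      rw [← hexp]
      exact le_add_of_nonneg_right (aux_ip_pos hpre _)
    have hnb : ‖ip (u' - v') (u' - v')‖
        ≤ ‖(ip u' u' + ip v' v') + (ip u' u' + ip v' v')‖ :=
      CStarAlgebra.norm_le_norm_of_nonneg_of_le (aux_ip_pos hpre _) hle
    have htri : ‖(ip u' u' + ip v' v') + (ip u' u' + ip v' v')‖
        ≤ (‖ip u' u'‖ + ‖ip v' v'‖) + (‖ip u' u'‖ + ‖ip v' v'‖) :=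
      (norm_add_le _ _).trans (by gcongr <;> exact norm_add_le _ _)
    have hzz := norm_nonneg (ip z z)
    calc ‖ip (u' - v') (u' - v')‖
        ≤ (‖ip u' u'‖ + ‖ip v' v'‖) + (‖ip u' u'‖ + ‖ip v' v'‖) := hnb.trans htri
      _ ≤ (2 * |C1| + 2 * |C2| + 1) * ‖ip z z‖ := by nlinarith [hb1, hb2]
      _ < (2 * |C1| + 2 * |C2| + 1) * (ε / (2 * |C1| + 2 * |C2| + 1)) :=
          mul_lt_mul_of_pos_left hlt hK
      _ = ε := by field_simp
  have hip0 : ip (W g (σ a (W g⁻¹ x)) - σ (τ.τ g⁻¹ a) x)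
      (W g (σ a (W g⁻¹ x)) - σ (τ.τ g⁻¹ a) x) = 0 := by
    have hle0 : ‖ip (W g (σ a (W g⁻¹ x)) - σ (τ.τ g⁻¹ a) x)
        (W g (σ a (W g⁻¹ x)) - σ (τ.τ g⁻¹ a) x)‖ ≤ 0 := by
      by_contra hcon
      push_neg at hcon
      exact lt_irrefl _ (hnorm _ hcon)
    exact norm_le_zero_iff.mp hle0
  exact sub_eq_zero.mp (hpre.definite _ hip0)
end
end
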